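/- arXiv:2504.02646 — 3 statements merged into one kernel-verified Lean document; each statement's English description precedes it below -/
import Mathlib

section
/- Unbiasedness of DSO under homogeneous rewards within neighborhoods: if the similar sentence support condition holds and the gradient-in-neighborhood framework satisfies that for every neighborhood the quantity q^{π_θ}(x,φ(s)) = q^{π₀}(x,φ(s)) (no within-neighbor reward shift under either policy), and the score function is constant within each neighborhood, then E_{s∼π₀(·|x)} [ w(φ(s),x) · g(φ(s)) · q(x,s) ] = E_{s∼π_θ(·|x)} [ g(φ(s)) · q^{π_θ}(x,φ(s)) ] where g(φ(s)) := ∇_θ log π_θ(φ(s)|x). In the special case where K(s,s') = 1{φ(s)=φ(s')} induces a partition of S into clusters, and q(x,·) is constant on each cluster, the DSO estimator is unbiased: E_{s∼π₀(·|x)} [ (π_θ(φ(s)|x)/π₀(φ(s)|x)) · g(φ(s)) · q(x,s) ] = Σ_{s} π_θ(s|x) · g(φ(s)) · q(x,s). -/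
/-!
Write `P_v(c)` for the mass that weights `v` put on the cluster `c`. The expression
`∑ s, w s * (P_v(φ s) * F s)` is the double sum of `w s * v s' * F s` over pairs `s, s'` in a
common cluster, so for `F` constant on clusters it is symmetric in `w` and `v`. Taking
`F = g ∘ φ * q / P₀ ∘ φ` moves the importance weight from `π₀` to `π_θ`; the factor `P₀(φ s)`
then cancels, except on clusters of `π₀`-mass zero, which carry no `π_θ`-mass by the support
condition.
-/

open Finset

section ClusterMass

variable {S C : Type*} [Fintype S] [DecidableEq C] (φ : S → C)

def clusterMass (π : S → ℝ) (c : C) : ℝ :=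
  ∑ s ∈ univ.filter (fun s => φ s = c), π s

theorem sum_mul_clusterMass_mul (w v F : S → ℝ) :
    ∑ s, w s * (clusterMass φ v (φ s) * F s)
      = ∑ s, ∑ s', if φ s' = φ s then w s * v s' * F s else 0 := by
  refine sum_congr rfl fun s _ => ?_
  rw [clusterMass, sum_filter, sum_mul, mul_sum]
  refine sum_congr rfl fun s' _ => ?_
  split_ifs <;> ring

theorem sum_mul_clusterMass_mul_comm {F : S → ℝ} (hF : ∀ s s', φ s = φ s' → F s = F s')
    (w v : S → ℝ) :
    ∑ s, w s * (clusterMass φ v (φ s) * F s) = ∑ s, v s * (clusterMass φ w (φ s) * F s) := by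
  rw [sum_mul_clusterMass_mul, sum_mul_clusterMass_mul, sum_comm]
  refine sum_congr rfl fun s _ => sum_congr rfl fun s' _ => ?_
  split_ifs with h h' h'
  · rw [hF s' s h.symm]; ring
  · exact absurd h.symm h'
  · exact absurd h'.symm h
  · rfl

theorem eq_zero_of_clusterMass_eq_zero {πθ π₀ : S → ℝ} (hπθ : ∀ s, 0 ≤ πθ s)
    (hsupport : ∀ c, 0 < clusterMass φ πθ c → 0 < clusterMass φ π₀ c) {s : S}
    (h : clusterMass φ π₀ (φ s) = 0) : πθ s = 0 := by
  have hθ : clusterMass φ πθ (φ s) = 0 :=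
    le_antisymm (not_lt.mp fun hpos => (hsupport _ hpos).ne' h)
      (sum_nonneg fun s _ => hπθ s)
  exact (sum_eq_zero_iff_of_nonneg fun s _ => hπθ s).mp hθ s (by simp)

end ClusterMass

theorem stmt_6_general {S C : Type*} [Fintype S] [DecidableEq C]
    (φ : S → C) (πθ π₀ : S → ℝ) (q : S → ℝ) (g : C → ℝ)
    (hπθ_nonneg : ∀ s, 0 ≤ πθ s)
    (hq_const : ∀ s s', φ s = φ s' → q s = q s')
    (hsupport : ∀ c, 0 < ∑ s ∈ univ.filter (fun s => φ s = c), πθ s →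
        0 < ∑ s ∈ univ.filter (fun s => φ s = c), π₀ s) :
    ∑ s, π₀ s * ((∑ s' ∈ univ.filter (fun s' => φ s' = φ s), πθ s')
        / (∑ s' ∈ univ.filter (fun s' => φ s' = φ s), π₀ s')
        * g (φ s) * q s)
      = ∑ s, πθ s * g (φ s) * q s := by
  set F : S → ℝ := fun s => g (φ s) * q s / clusterMass φ π₀ (φ s)
  have hF : ∀ s s', φ s = φ s' → F s = F s' := fun s s' h => by
    simp only [F, h, hq_const s s' h]
  calc _ = ∑ s, π₀ s * (clusterMass φ πθ (φ s) * F s) := by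
        refine sum_congr rfl fun s _ => ?_
        simp only [F, clusterMass]
        ring
    _ = ∑ s, πθ s * (clusterMass φ π₀ (φ s) * F s) := sum_mul_clusterMass_mul_comm φ hF π₀ πθ
    _ = _ := by
        refine sum_congr rfl fun s _ => ?_
        rcases eq_or_ne (clusterMass φ π₀ (φ s)) 0 with h | h
        · simp [eq_zero_of_clusterMass_eq_zero φ hπθ_nonneg hsupport h]
        · simp only [F]
          field_simp

/-- unbiasedness of the DSO estimator when the kernel induces a
partition of S into clusters and the reward is constant on each cluster:
E_{s∼π₀}[(π_θ(φ(s))/π₀(φ(s)))·g(φ(s))·q(s)] = Σ_s π_θ(s)·g(φ(s))·q(s). -/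
theorem stmt_6 {S C : Type*} [Fintype S] [Fintype C] [DecidableEq C]
    (φ : S → C) (πθ π₀ : S → ℝ) (q : S → ℝ) (g : C → ℝ)
    (hπθ_nonneg : ∀ s, 0 ≤ πθ s) (hπθ_sum : ∑ s, πθ s = 1)
    (hπ₀_nonneg : ∀ s, 0 ≤ π₀ s) (hπ₀_sum : ∑ s, π₀ s = 1)
    (hq_const : ∀ s s', φ s = φ s' → q s = q s')
    (hsupport : ∀ c, 0 < ∑ s ∈ univ.filter (fun s => φ s = c), πθ s →
        0 < ∑ s ∈ univ.filter (fun s => φ s = c), π₀ s) :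
    ∑ s, π₀ s * ((∑ s' ∈ univ.filter (fun s' => φ s' = φ s), πθ s')
        / (∑ s' ∈ univ.filter (fun s' => φ s' = φ s), π₀ s')
        * g (φ s) * q s)
      = ∑ s, πθ s * g (φ s) * q s :=
  stmt_6_general φ πθ π₀ q g hπθ_nonneg hq_const hsupport
end

section
/- Bias of cluster-based importance sampling with within-cluster reward shift: with a partition φ of sentences into clusters, the bias of the DSO estimator equals the expectation over the target policy's cluster distribution of g(c) times the difference of within-cluster expected rewards: E_{s∼π₀}[ (π_θ(φ(s))/π₀(φ(s))) · g(φ(s)) · q(s) ] − E_{s∼π_θ}[ g(φ(s)) · q(s) ] = Σ_c π_θ(c) · g(c) · ( q^{π₀}(c) − q^{π_θ}(c) ), where q^{π}(c) := Σ_{s: φ(s)=c} (π(s)/π(c)) · q(s). -/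
/-!
Summing over each cluster separately, the importance-weighted term contributes
`π_θ(c) / π₀(c) · g(c) · Σ_{φ s = c} π₀(s) q(s) = π_θ(c) · g(c) · q^{π₀}(c)`, while the on-policy
term contributes `g(c) · Σ_{φ s = c} π_θ(s) q(s) = π_θ(c) · g(c) · q^{π_θ}(c)`. The second identity
also holds on clusters of zero π_θ-mass, where both sides vanish because π_θ is nonnegative.
-/

open Finset

section Clusters

variable {S C : Type*} [Fintype S] [DecidableEq C]

/-- `clusterSum φ π c` is the paper's `π(c)`. -/
def clusterSum {M : Type*} [AddCommMonoid M] (φ : S → C) (f : S → M) (c : C) : M :=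
  ∑ s ∈ univ.filter (fun s => φ s = c), f s

/-- The paper's `q^π(c)`; it is `0` on clusters of zero `π`-mass. -/
noncomputable def clusterMean (φ : S → C) (π q : S → ℝ) (c : C) : ℝ :=
  clusterSum φ (fun s => π s * q s) c / clusterSum φ π c

theorem sum_comp_mul_eq_sum_mul_clusterSum {R : Type*} [NonUnitalNonAssocSemiring R] [Fintype C]
    (φ : S → C) (F : C → R) (f : S → R) :
    ∑ s, F (φ s) * f s = ∑ c, F c * clusterSum φ f c := by
  rw [← sum_fiberwise univ φ]
  refine sum_congr rfl fun c _ => ?_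
  rw [clusterSum, mul_sum]
  exact sum_congr rfl fun s hs => by rw [(mem_filter.1 hs).2]

theorem clusterSum_mul_clusterMean {φ : S → C} {π : S → ℝ} (hπ : ∀ s, 0 ≤ π s) (q : S → ℝ)
    (c : C) : clusterSum φ π c * clusterMean φ π q c = clusterSum φ (fun s => π s * q s) c := by
  refine mul_div_cancel_of_imp' fun h => sum_eq_zero fun s hs => ?_
  rw [(sum_eq_zero_iff_of_nonneg fun s _ => hπ s).1 h s hs, zero_mul]

theorem clusterImportanceSampling_bias [Fintype C] (φ : S → C) (πθ π₀ q : S → ℝ)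
    (g : C → ℝ) (hπθ : ∀ s, 0 ≤ πθ s) :
    ∑ s, π₀ s * (clusterSum φ πθ (φ s) / clusterSum φ π₀ (φ s) * g (φ s) * q s)
        - ∑ s, πθ s * g (φ s) * q s
      = ∑ c, clusterSum φ πθ c * g c * (clusterMean φ π₀ q c - clusterMean φ πθ q c) := by
  have weighted : ∑ s, π₀ s * (clusterSum φ πθ (φ s) / clusterSum φ π₀ (φ s) * g (φ s) * q s)
      = ∑ c, clusterSum φ πθ c * g c * clusterMean φ π₀ q c := by
    calc _ = ∑ s, (clusterSum φ πθ (φ s) / clusterSum φ π₀ (φ s) * g (φ s)) * (π₀ s * q s) :=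
          sum_congr rfl fun s _ => by ring
      _ = _ := by
          rw [sum_comp_mul_eq_sum_mul_clusterSum φ
            fun c => clusterSum φ πθ c / clusterSum φ π₀ c * g c]
          exact sum_congr rfl fun c _ => by rw [clusterMean]; ring
  have onPolicy : ∑ s, πθ s * g (φ s) * q s
      = ∑ c, clusterSum φ πθ c * g c * clusterMean φ πθ q c := by
    calc _ = ∑ s, g (φ s) * (πθ s * q s) := sum_congr rfl fun s _ => by ring
      _ = _ := by
          rw [sum_comp_mul_eq_sum_mul_clusterSum]
          exact sum_congr rfl fun c _ => by
            rw [mul_right_comm, clusterSum_mul_clusterMean hπθ, mul_comm]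
  rw [weighted, onPolicy, ← sum_sub_distrib]
  exact sum_congr rfl fun c _ => by ring

end Clusters

theorem stmt_7_general {S C : Type*} [Fintype S] [Fintype C] [DecidableEq C]
    (φ : S → C) (πθ π₀ : S → ℝ) (q : S → ℝ) (g : C → ℝ)
    (hπθ_nonneg : ∀ s, 0 ≤ πθ s) :
    (∑ s, π₀ s * ((∑ s' ∈ univ.filter (fun s' => φ s' = φ s), πθ s')
          / (∑ s' ∈ univ.filter (fun s' => φ s' = φ s), π₀ s')
          * g (φ s) * q s))
      - (∑ s, πθ s * g (φ s) * q s)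
      = ∑ c, (∑ s ∈ univ.filter (fun s => φ s = c), πθ s) * g c *
          ((∑ s ∈ univ.filter (fun s => φ s = c), π₀ s * q s)
              / (∑ s ∈ univ.filter (fun s => φ s = c), π₀ s)
            - (∑ s ∈ univ.filter (fun s => φ s = c), πθ s * q s)
              / (∑ s ∈ univ.filter (fun s => φ s = c), πθ s)) :=
  clusterImportanceSampling_bias φ πθ π₀ q g hπθ_nonneg

/-- bias of cluster-based importance sampling with within-cluster
reward shift equals Σ_c π_θ(c)·g(c)·(q^{π₀}(c) − q^{π_θ}(c)). -/
theorem stmt_7 {S C : Type*} [Fintype S] [Fintype C] [DecidableEq C]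
    (φ : S → C) (πθ π₀ : S → ℝ) (q : S → ℝ) (g : C → ℝ)
    (hπθ_nonneg : ∀ s, 0 ≤ πθ s) (hπθ_sum : ∑ s, πθ s = 1)
    (hπ₀_nonneg : ∀ s, 0 ≤ π₀ s) (hπ₀_sum : ∑ s, π₀ s = 1)
    (hsupport : ∀ c, 0 < ∑ s ∈ univ.filter (fun s => φ s = c), πθ s →
        0 < ∑ s ∈ univ.filter (fun s => φ s = c), π₀ s) :
    (∑ s, π₀ s * ((∑ s' ∈ univ.filter (fun s' => φ s' = φ s), πθ s')
          / (∑ s' ∈ univ.filter (fun s' => φ s' = φ s), π₀ s')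
          * g (φ s) * q s))
      - (∑ s, πθ s * g (φ s) * q s)
      = ∑ c, (∑ s ∈ univ.filter (fun s => φ s = c), πθ s) * g c *
          ((∑ s ∈ univ.filter (fun s => φ s = c), π₀ s * q s)
              / (∑ s ∈ univ.filter (fun s => φ s = c), π₀ s)
            - (∑ s ∈ univ.filter (fun s => φ s = c), πθ s * q s)
              / (∑ s ∈ univ.filter (fun s => φ s = c), πθ s)) :=
  stmt_7_general φ πθ π₀ q g hπθ_nonneg
end

section
/- Equivalence of the sentence-space and action-space policy gradients: under the setup of the previous statement, Σ_x p(x) Σ_a π_θ(a|x)·(d/dθ log π_θ(a|x))·q̄(x,a) = Σ_x p(x) Σ_s π_θ(s|x)·(d/dθ log π_θ(s|x))·q(x,s), where q̄(x,a) := Σ_s p_LLM(s|x,a)·q(x,s), π_θ(s|x) := Σ_a p_LLM(s|x,a)·π_θ(a|x), and it is assumed that π_θ(s|x) > 0 for all s with some a having p_LLM(s|x,a) > 0. -/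
/-! Both sides reduce to `∑ₛ (d/dθ πθ(s|x)) q(x,s)`: the log-derivative trick `π · (log π)' = π'`
turns each side into a derivative of a probability, and the derivative of the marginal
`πθ(s|x) = ∑ₐ pLLM(s|x,a) πθ(a|x)` is the same mixture of the derivatives `πθ'(a|x)`. -/

open Finset

/-- At a zero of a nonnegative function the factor `f x` kills the junk value of
`deriv (log ∘ f)`, and `f' x = 0` because `x` is a minimum. -/
theorem mul_deriv_log_of_nonneg {f : ℝ → ℝ} {x : ℝ} (hf : ∀ t, 0 ≤ f t)
    (hd : DifferentiableAt ℝ f x) :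
    f x * deriv (fun t => Real.log (f t)) x = deriv f x := by
  rcases (hf x).eq_or_lt with hzero | hpos
  · have hmin : IsLocalMin f x :=
      IsMinOn.isLocalMin (fun t _ => by simpa [← hzero] using hf t) Filter.univ_mem
    rw [← hzero, hmin.deriv_eq_zero, zero_mul]
  · rw [(hd.hasDerivAt.log hpos.ne').deriv]
    field_simp

theorem deriv_sum_const_mul {ι : Type*} [Fintype ι] {g : ℝ → ι → ℝ} {x : ℝ} (c : ι → ℝ)
    (hg : ∀ i, DifferentiableAt ℝ (fun t => g t i) x) :
    deriv (fun t => ∑ i, c i * g t i) x = ∑ i, c i * deriv (fun t => g t i) x :=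
  (HasDerivAt.fun_sum fun i _ => (hg i).hasDerivAt.const_mul (c i)).deriv

theorem sum_mul_sum_mul_comm {ι κ : Type*} [Fintype ι] [Fintype κ] (w : ι → ℝ)
    (P : ι → κ → ℝ) (q : κ → ℝ) :
    ∑ i, w i * ∑ k, P i k * q k = ∑ k, (∑ i, P i k * w i) * q k := by
  simp only [mul_sum, sum_mul]
  rw [sum_comm]
  exact sum_congr rfl fun _ _ => sum_congr rfl fun _ _ => by ring

theorem stmt_15_general {X A S : Type*} [Fintype X] [Fintype A] [Fintype S]
    (p : X → ℝ) (π : ℝ → X → A → ℝ) (pLLM : X → A → S → ℝ) (q : X → S → ℝ)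
    (θ : ℝ)
    (hπ_pos : ∀ t x a, 0 < π t x a)
    (hπ_diff : ∀ x a, Differentiable ℝ (fun t => π t x a))
    (hpl_nonneg : ∀ x a s, 0 ≤ pLLM x a s) :
    ∑ x, p x * ∑ a, π θ x a * deriv (fun t => Real.log (π t x a)) θ
        * ∑ s, pLLM x a s * q x s
      = ∑ x, p x * ∑ s, (∑ a, pLLM x a s * π θ x a)
          * deriv (fun t => Real.log (∑ a, pLLM x a s * π t x a)) θ
          * q x s := by
  refine sum_congr rfl fun x _ => congrArg (p x * ·) ?_
  have hπ_nonneg : ∀ a t, 0 ≤ π t x a := fun a t => (hπ_pos t x a).le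
  have hmarg_nonneg : ∀ s t, 0 ≤ ∑ a, pLLM x a s * π t x a := fun s t =>
    sum_nonneg fun a _ => mul_nonneg (hpl_nonneg x a s) (hπ_nonneg a t)
  have hmarg_diff : ∀ s, DifferentiableAt ℝ (fun t => ∑ a, pLLM x a s * π t x a) θ :=
    fun s => by fun_prop
  calc _ = ∑ a, deriv (fun t => π t x a) θ * ∑ s, pLLM x a s * q x s := by
        simp only [mul_deriv_log_of_nonneg (hπ_nonneg _) (hπ_diff x _ θ)]
    _ = ∑ s, (∑ a, pLLM x a s * deriv (fun t => π t x a) θ) * q x s :=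
        sum_mul_sum_mul_comm _ _ _
    _ = _ := by
        simp only [mul_deriv_log_of_nonneg (hmarg_nonneg _) (hmarg_diff _),
          deriv_sum_const_mul _ fun a => hπ_diff x a θ]

/-- equivalence of the action-space and sentence-space policy
gradients: Σ_x p(x) Σ_a π_θ(a|x)·(d/dθ log π_θ(a|x))·q̄(x,a)
 = Σ_x p(x) Σ_s π_θ(s|x)·(d/dθ log π_θ(s|x))·q(x,s). -/
theorem stmt_15 {X A S : Type*} [Fintype X] [Fintype A] [Fintype S]
    (p : X → ℝ) (π : ℝ → X → A → ℝ) (pLLM : X → A → S → ℝ) (q : X → S → ℝ)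
    (θ : ℝ)
    (hp_nonneg : ∀ x, 0 ≤ p x) (hp_sum : ∑ x, p x = 1)
    (hπ_pos : ∀ t x a, 0 < π t x a)
    (hπ_sum : ∀ t x, ∑ a, π t x a = 1)
    (hπ_diff : ∀ x a, Differentiable ℝ (fun t => π t x a))
    (hpl_nonneg : ∀ x a s, 0 ≤ pLLM x a s)
    (hpl_sum : ∀ x a, ∑ s, pLLM x a s = 1)
    (hmarg_pos : ∀ t x s, (∃ a, 0 < pLLM x a s) →
        0 < ∑ a, pLLM x a s * π t x a) :
    ∑ x, p x * ∑ a, π θ x a * deriv (fun t => Real.log (π t x a)) θ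
        * ∑ s, pLLM x a s * q x s
      = ∑ x, p x * ∑ s, (∑ a, pLLM x a s * π θ x a)
          * deriv (fun t => Real.log (∑ a, pLLM x a s * π t x a)) θ
          * q x s :=
  stmt_15_general p π pLLM q θ hπ_pos hπ_diff hpl_nonneg
end
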